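/- Theorem 4, part 2 (upper bound on quantum decoding probability, pure-codeword form): Let α be a finite type, let p : α → ℝ be a probability distribution (p(x) ≥ 0, Σ_x p(x) = 1), let V be a finite-dimensional complex inner product space, let E be a subspace of V with dim E ≤ 2^m, let (φ_x)_{x∈α} be unit vectors with φ_x ∈ E for every x (the codewords over m qubits, possibly embedded with ancilla in V), and let (P_x)_{x∈α} be orthogonal projections on V with mutually orthogonal ranges (P_x P_{x'} = 0 for x ≠ x'), representing the decoding measurement. Then the probability of correct decoding satisfies Σ_x p(x)·‖P_x φ_x‖² ≤ P(p, 2^m), where P(p, d) is the maximum of Σ_{x∈S} p(x) over subsets S ⊆ α with |S| ≤ d. -/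

import Mathlib

/-- `probTop p d` is `P(p, d)`: the net probability of the `d` most likely elements,
i.e. the maximum of `Σ_{x∈S} p(x)` over subsets `S` with `|S| ≤ d`. -/
noncomputable def probTop {α : Type*} [Fintype α] (p : α → ℝ) (d : ℕ) : ℝ :=
  ((Finset.univ : Finset α).powerset.filter (fun S => S.card ≤ d)).sup'
    ⟨∅, by simp⟩ (fun S => ∑ x ∈ S, p x)

/-! The success probabilities `q x = ‖P x (φ x)‖²` lie in `[0, 1]` and sum to at most
`dim E ≤ 2 ^ m`: expanding `φ x` in an orthonormal basis `(e j)` of `E`, Cauchy–Schwarz gives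
`q x ≤ ∑ j, ‖P x (e j)‖²`, while for each `j` the mutually orthogonal projections satisfy
`∑ x, ‖P x (e j)‖² ≤ ‖e j‖² = 1`. A weighted sum `∑ x, p x * q x` with such weights is at most
the mass of the `2 ^ m` most likely elements: if `t` separates the values of `p` on such a top set
`S` from those off it, then `p x * q x ≤ [x ∈ S] p x + t (q x - [x ∈ S])` pointwise. -/

open Finset
open scoped InnerProductSpace

section probTop

variable {α : Type*} [Fintype α]

lemma sum_le_probTop (p : α → ℝ) {d : ℕ} {S : Finset α} (hS : #S ≤ d) :
    ∑ x ∈ S, p x ≤ probTop p d :=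
  le_sup' (fun S => ∑ x ∈ S, p x) (by simpa using hS)

lemma exists_card_eq_forall_le (p : α → ℝ) {d : ℕ} (hd : d ≤ Fintype.card α) :
    ∃ S : Finset α, #S = d ∧ ∀ x ∈ S, ∀ y ∉ S, p y ≤ p x := by
  classical
  induction d with
  | zero => exact ⟨∅, by simp, by simp⟩
  | succ d ih =>
    obtain ⟨S, hS, htop⟩ := ih (by omega)
    have hne : Sᶜ.Nonempty := by rw [← card_pos, card_compl]; omega
    obtain ⟨y, hy, hmax⟩ := exists_max_image Sᶜ p hne
    rw [mem_compl] at hy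
    refine ⟨insert y S, by rw [card_insert_of_notMem hy, hS], fun x hx z hz => ?_⟩
    rw [mem_insert, not_or] at hz
    rcases mem_insert.1 hx with rfl | hx
    · exact hmax z (mem_compl.2 hz.2)
    · exact htop x hx z hz.2

lemma sum_mul_le_sum_of_threshold {p q : α → ℝ} {S : Finset α} {t : ℝ} (ht : 0 ≤ t)
    (hS : ∀ x ∈ S, t ≤ p x) (hSc : ∀ y ∉ S, p y ≤ t) (hq0 : ∀ x, 0 ≤ q x)
    (hq1 : ∀ x, q x ≤ 1) (hq : ∑ x, q x ≤ #S) : ∑ x, p x * q x ≤ ∑ x ∈ S, p x := by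
  classical
  have hpoint : ∀ x, p x * q x ≤
      (if x ∈ S then p x else 0) + t * (q x - if x ∈ S then 1 else 0) := by
    intro x
    split_ifs with hx
    · nlinarith [hS x hx, hq1 x]
    · nlinarith [hSc x hx, hq0 x]
  calc ∑ x, p x * q x
      ≤ ∑ x, ((if x ∈ S then p x else 0) + t * (q x - if x ∈ S then 1 else 0)) :=
        sum_le_sum fun x _ => hpoint x
    _ = ∑ x ∈ S, p x + t * (∑ x, q x - #S) := by
        simp [sum_add_distrib, ← mul_sum, sum_sub_distrib, sum_ite_mem]
    _ ≤ ∑ x ∈ S, p x := by linarith [mul_nonpos_of_nonneg_of_nonpos ht (sub_nonpos.2 hq)]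

theorem sum_mul_le_probTop {p q : α → ℝ} (hp : ∀ x, 0 ≤ p x) (hq0 : ∀ x, 0 ≤ q x)
    (hq1 : ∀ x, q x ≤ 1) {d : ℕ} (hq : ∑ x, q x ≤ d) : ∑ x, p x * q x ≤ probTop p d := by
  classical
  rcases le_or_gt (Fintype.card α) d with hcard | hcard
  · calc ∑ x, p x * q x ≤ ∑ x, p x :=
          sum_le_sum fun x _ => mul_le_of_le_one_right (hp x) (hq1 x)
      _ ≤ probTop p d := sum_le_probTop p (by simpa using hcard)
  · obtain ⟨S, hS, htop⟩ := exists_card_eq_forall_le p hcard.le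
    have hne : Sᶜ.Nonempty := by rw [← card_pos, card_compl]; omega
    obtain ⟨y, hy, hmax⟩ := exists_max_image Sᶜ p hne
    rw [mem_compl] at hy
    calc ∑ x, p x * q x ≤ ∑ x ∈ S, p x :=
          sum_mul_le_sum_of_threshold (hp y) (fun x hx => htop x hx y hy)
            (fun z hz => hmax z (mem_compl.2 hz)) hq0 hq1 (hS ▸ hq)
      _ ≤ probTop p d := sum_le_probTop p hS.le

end probTop

namespace LinearMap.IsSymmetricProjection

variable {𝕜 E : Type*} [RCLike 𝕜] [NormedAddCommGroup E] [InnerProductSpace 𝕜 E]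
  {T : E →ₗ[𝕜] E}

lemma re_inner_apply_self (hT : T.IsSymmetricProjection) (v : E) :
    RCLike.re ⟪T v, v⟫_𝕜 = ‖T v‖ ^ 2 := by
  conv_lhs => rw [← hT.isIdempotentElem]
  rw [Module.End.mul_apply, hT.isSymmetric]
  exact inner_self_eq_norm_sq _

lemma norm_apply_le (hT : T.IsSymmetricProjection) (v : E) : ‖T v‖ ≤ ‖v‖ := by
  obtain ⟨K, _, rfl⟩ := isSymmetricProjection_iff_eq_coe_starProjection.mp hT
  exact K.norm_starProjection_apply_le v

end LinearMap.IsSymmetricProjection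

namespace OrthonormalBasis

variable {𝕜 F G ι : Type*} [RCLike 𝕜] [NormedAddCommGroup F] [InnerProductSpace 𝕜 F]
  [SeminormedAddCommGroup G] [NormedSpace 𝕜 G] [Fintype ι]

lemma norm_sq_apply_le (b : OrthonormalBasis ι 𝕜 F) (T : F →ₗ[𝕜] G) (v : F) :
    ‖T v‖ ^ 2 ≤ ‖v‖ ^ 2 * ∑ i, ‖T (b i)‖ ^ 2 := by
  have hTv : T v = ∑ i, ⟪b i, v⟫_𝕜 • T (b i) := by
    conv_lhs => rw [← b.sum_repr' v]
    simp
  calc ‖T v‖ ^ 2 ≤ (∑ i, ‖⟪b i, v⟫_𝕜‖ * ‖T (b i)‖) ^ 2 := by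
        gcongr
        rw [hTv]
        exact (norm_sum_le _ _).trans_eq (by simp [norm_smul])
    _ ≤ (∑ i, ‖⟪b i, v⟫_𝕜‖ ^ 2) * ∑ i, ‖T (b i)‖ ^ 2 := sum_mul_sq_le_sq_mul_sq _ _ _
    _ = ‖v‖ ^ 2 * ∑ i, ‖T (b i)‖ ^ 2 := by rw [b.sum_sq_norm_inner_right]

end OrthonormalBasis

namespace OrthogonalIdempotents

variable {𝕜 E ι : Type*} [RCLike 𝕜] [NormedAddCommGroup E] [InnerProductSpace 𝕜 E]
  {P : ι → E →ₗ[𝕜] E}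

lemma isSymmetricProjection_sum (hP : OrthogonalIdempotents P) (hsym : ∀ i, (P i).IsSymmetric)
    (s : Finset ι) : (∑ i ∈ s, P i).IsSymmetricProjection where
  isIdempotentElem := hP.isIdempotentElem_sum
  isSymmetric u v := by simp [LinearMap.sum_apply, sum_inner, inner_sum, hsym _ u v]

lemma sum_norm_sq_apply_le [Fintype ι] (hP : OrthogonalIdempotents P)
    (hsym : ∀ i, (P i).IsSymmetric) (v : E) : ∑ i, ‖P i v‖ ^ 2 ≤ ‖v‖ ^ 2 := by
  have hQ := hP.isSymmetricProjection_sum hsym univ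
  calc ∑ i, ‖P i v‖ ^ 2 = RCLike.re ⟪(∑ i, P i) v, v⟫_𝕜 := by
        simp [← (LinearMap.IsSymmetricProjection.mk (hP.idem _) (hsym _)).re_inner_apply_self,
          LinearMap.sum_apply, sum_inner]
    _ = ‖(∑ i, P i) v‖ ^ 2 := hQ.re_inner_apply_self v
    _ ≤ ‖v‖ ^ 2 := by gcongr; exact hQ.norm_apply_le v

theorem sum_norm_sq_apply_le_finrank [Fintype ι] (hP : OrthogonalIdempotents P)
    (hsym : ∀ i, (P i).IsSymmetric) (K : Submodule 𝕜 E) [FiniteDimensional 𝕜 K] {φ : ι → E}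
    (hφ : ∀ i, ‖φ i‖ ≤ 1) (hφK : ∀ i, φ i ∈ K) :
    ∑ i, ‖P i (φ i)‖ ^ 2 ≤ Module.finrank 𝕜 K := by
  let b := stdOrthonormalBasis 𝕜 K
  calc ∑ i, ‖P i (φ i)‖ ^ 2 ≤ ∑ i, ∑ j, ‖P i (b j)‖ ^ 2 := by
        refine sum_le_sum fun i _ => ?_
        have hφi : ‖(⟨φ i, hφK i⟩ : K)‖ ^ 2 ≤ 1 := pow_le_one₀ (norm_nonneg _) (hφ i)
        calc ‖P i (φ i)‖ ^ 2 ≤ ‖(⟨φ i, hφK i⟩ : K)‖ ^ 2 * ∑ j, ‖P i (b j)‖ ^ 2 :=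
              b.norm_sq_apply_le (P i ∘ₗ K.subtype) ⟨φ i, hφK i⟩
          _ ≤ ∑ j, ‖P i (b j)‖ ^ 2 := mul_le_of_le_one_left (by positivity) hφi
    _ = ∑ j, ∑ i, ‖P i (b j)‖ ^ 2 := sum_comm
    _ ≤ ∑ j, ‖(b j : E)‖ ^ 2 := sum_le_sum fun j _ => hP.sum_norm_sq_apply_le hsym _
    _ = Module.finrank 𝕜 K := by simp only [Submodule.norm_coe, b.norm_eq_one]; simp

end OrthogonalIdempotents

theorem decoding_prob_le_probTop_general {α : Type*} [Fintype α]
    (p : α → ℝ) (h0 : ∀ x, 0 ≤ p x)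
    (m : ℕ) {V : Type*} [NormedAddCommGroup V] [InnerProductSpace ℂ V]
    [FiniteDimensional ℂ V]
    (E : Submodule ℂ V) (hdim : Module.finrank ℂ E ≤ 2 ^ m)
    (φ : α → V) (hφn : ∀ x, ‖φ x‖ = 1) (hφE : ∀ x, φ x ∈ E)
    (P : α → V →ₗ[ℂ] V)
    (hproj : ∀ x, P x ∘ₗ P x = P x)
    (hsa : ∀ x, LinearMap.IsSymmetric (P x))
    (horth : ∀ x x', x ≠ x' → P x ∘ₗ P x' = 0) :
    ∑ x, p x * ‖P x (φ x)‖ ^ 2 ≤ probTop p (2 ^ m) := by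
  have hP : OrthogonalIdempotents P := ⟨hproj, fun x x' h => horth x x' h⟩
  have hPx (x : α) : (P x).IsSymmetricProjection := ⟨hproj x, hsa x⟩
  have hsuccess_le_one (x : α) : ‖P x (φ x)‖ ^ 2 ≤ 1 :=
    pow_le_one₀ (norm_nonneg _) ((hPx x).norm_apply_le (φ x) |>.trans_eq (hφn x))
  have htotal : ∑ x, ‖P x (φ x)‖ ^ 2 ≤ ((2 ^ m : ℕ) : ℝ) :=
    (hP.sum_norm_sq_apply_le_finrank hsa E (fun x => (hφn x).le) hφE).trans
      (by exact_mod_cast hdim)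
  exact sum_mul_le_probTop h0 (fun x => sq_nonneg _) hsuccess_le_one htotal

/-- Theorem 4, part 2 (pure-codeword form): if the codewords `φ_x` are unit vectors
lying in a subspace `E` of dimension at most `2^m` (an encoding over `m` qubits,
possibly embedded with ancilla in `V`) and the decoding measurement is given by
orthogonal projections `P_x` with mutually orthogonal ranges, then the probability of
correct decoding satisfies `Σ_x p(x)·‖P_x φ_x‖² ≤ P(p, 2^m)`. -/
theorem decoding_prob_le_probTop {α : Type*} [Fintype α]
    (p : α → ℝ) (h0 : ∀ x, 0 ≤ p x) (h1 : ∑ x, p x = 1)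
    (m : ℕ) {V : Type*} [NormedAddCommGroup V] [InnerProductSpace ℂ V]
    [FiniteDimensional ℂ V]
    (E : Submodule ℂ V) (hdim : Module.finrank ℂ E ≤ 2 ^ m)
    (φ : α → V) (hφn : ∀ x, ‖φ x‖ = 1) (hφE : ∀ x, φ x ∈ E)
    (P : α → V →ₗ[ℂ] V)
    (hproj : ∀ x, P x ∘ₗ P x = P x)
    (hsa : ∀ x, LinearMap.IsSymmetric (P x))
    (horth : ∀ x x', x ≠ x' → P x ∘ₗ P x' = 0) :
    ∑ x, p x * ‖P x (φ x)‖ ^ 2 ≤ probTop p (2 ^ m) :=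
  decoding_prob_le_probTop_general p h0 m E hdim φ hφn hφE P hproj hsa horth
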